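/- arXiv:2605.02399 — 5 statements merged into one kernel-verified Lean document; each statement's English description precedes it below -/
import Mathlib

section
/- Let G be a simple graph containing a cycle C = v - u - u_1 - u_2 - ... - u_l - u' - v of length at least 6, in which u - u_1 - ... - u_l - u' is an induced path. Then G contains an induced cycle of length at least 4, or G contains an induced claw J and a triangle T with J and T sharing at least one vertex. -/
open SimpleGraph

def IsClaw {V : Type*} (G : SimpleGraph V) (v a b c : V) : Prop :=
  a ≠ b ∧ a ≠ c ∧ b ≠ c ∧ G.Adj v a ∧ G.Adj v b ∧ G.Adj v c ∧
    ¬ G.Adj a b ∧ ¬ G.Adj a c ∧ ¬ G.Adj b c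

def IsTriangle {V : Type*} (G : SimpleGraph V) (a b c : V) : Prop :=
  G.Adj a b ∧ G.Adj a c ∧ G.Adj b c

def IsInducedCycle {V : Type*} (G : SimpleGraph V) {n : ℕ} (c : Fin n → V) : Prop :=
  Function.Injective c ∧ ∀ i j : Fin n,
    G.Adj (c i) (c j) ↔ ((i.val + 1) % n = j.val ∨ (j.val + 1) % n = i.val)

def IsInducedPathFun {V : Type*} (G : SimpleGraph V) {m : ℕ} (p : Fin m → V) : Prop :=
  Function.Injective p ∧
    ∀ i j : Fin m, G.Adj (p i) (p j) ↔ (i.val + 1 = j.val ∨ j.val + 1 = i.val)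

def IsProperIntervalGraph {W : Type*} (H : SimpleGraph W) : Prop :=
  ∃ f : W → ℝ, ∀ u v : W, u ≠ v → (H.Adj u v ↔ |f u - f v| ≤ 1)

def ComponentsPIGOrTree {W : Type*} (G : SimpleGraph W) : Prop :=
  ∀ c : G.ConnectedComponent,
    IsProperIntervalGraph (G.induce c.supp) ∨ (G.induce c.supp).IsTree

def IndepSet {V : Type*} (G : SimpleGraph V) (s : Set V) : Prop :=
  ∀ u ∈ s, ∀ v ∈ s, ¬ G.Adj u v

/-!
If `v` is adjacent to every vertex of the path, then `v` with `u₀, u₂, u₄` is a claw sharing `v`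
with the triangle `v u₀ u₁`. Otherwise pick a non-neighbour `u_k` of `v`; the neighbours `u_a`,
`u_b` of `v` nearest to `u_k` on either side span, together with `v`, an induced cycle of length
`b - a + 2 ≥ 4`.
-/

lemma Nat.exists_gap_around {P : ℕ → Prop} {i k l : ℕ} (hi : P i) (hik : i ≤ k) (hk : ¬ P k)
    (hl : P l) (hkl : k ≤ l) :
    ∃ a b, a < k ∧ k < b ∧ P a ∧ P b ∧ ∀ j, a < j → j < b → ¬ P j := by
  classical
  have hb : ∃ b, k < b ∧ P b := ⟨l, lt_of_le_of_ne hkl (by rintro rfl; exact hk hl), hl⟩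
  have ha : P (Nat.findGreatest P k) := Nat.findGreatest_spec hik hi
  refine ⟨Nat.findGreatest P k, Nat.find hb, lt_of_le_of_ne (Nat.findGreatest_le k)
    (fun h => hk (h ▸ ha)), (Nat.find_spec hb).1, ha, (Nat.find_spec hb).2, fun j haj hjb hj => ?_⟩
  rcases le_or_gt j k with hjk | hkj
  · exact Nat.findGreatest_is_greatest haj hjk hj
  · exact Nat.find_min hb hjb ⟨hkj, hj⟩

lemma Nat.add_one_mod_eq_iff {x y n : ℕ} (hx : x < n) (hy : y < n) :
    (x + 1) % n = y ↔ x + 1 = y ∨ x + 1 = n ∧ y = 0 := by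
  rcases (Nat.succ_le_of_lt hx).eq_or_lt with h | h
  · rw [← h, Nat.mod_self]
    omega
  · rw [Nat.mod_eq_of_lt h]
    omega

section

variable {V : Type*} {G : SimpleGraph V}

lemma IsInducedPathFun.segment {m : ℕ} {p : Fin m → V} (hp : IsInducedPathFun G p)
    (a k : ℕ) (h : a + k ≤ m) :
    IsInducedPathFun G (fun i : Fin k => p ⟨a + i, by omega⟩) := by
  refine ⟨fun i j hij => Fin.ext ?_, fun i j => (hp.2 _ _).trans ?_⟩
  · have := congrArg Fin.val (hp.1 hij)
    simp only at this
    omega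
  · simp only
    omega

lemma IsInducedPathFun.isInducedCycle_cons {k : ℕ} (hk : k ≠ 0) {p : Fin k → V}
    (hp : IsInducedPathFun G p) {v : V} (hv : ∀ i, v ≠ p i)
    (hadj : ∀ i, G.Adj v (p i) ↔ i.val = 0 ∨ i.val + 1 = k) :
    IsInducedCycle G (Fin.cons v p : Fin (k + 1) → V) := by
  refine ⟨Fin.cons_injective_iff.2 ⟨fun ⟨i, hi⟩ => hv i hi.symm, hp.1⟩, fun i j => ?_⟩
  rw [Nat.add_one_mod_eq_iff i.2 j.2, Nat.add_one_mod_eq_iff j.2 i.2]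
  cases i using Fin.cases with
  | zero => cases j using Fin.cases with
    | zero => simpa using hk
    | succ j => simp [hadj]
  | succ i => cases j using Fin.cases with
    | zero => simp [hadj, G.adj_comm _ v, or_comm]
    | succ j => simp [hp.2]

lemma IsInducedPathFun.exists_claw_triangle_of_forall_adj {m : ℕ} {p : Fin m → V}
    (hp : IsInducedPathFun G p) (hm : 5 ≤ m) {v : V} (hadj : ∀ i, G.Adj v (p i)) :
    ∃ w a b c x y z : V, IsClaw G w a b c ∧ IsTriangle G x y z ∧
      (({w, a, b, c} : Set V) ∩ {x, y, z}).Nonempty := by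
  have hne {i j : ℕ} (hi : i < m) (hj : j < m) (h : i ≠ j) : p ⟨i, hi⟩ ≠ p ⟨j, hj⟩ :=
    hp.1.ne (Fin.ne_of_val_ne h)
  have hnadj {i j : ℕ} (hi : i < m) (hj : j < m) (h : i + 2 ≤ j) :
      ¬ G.Adj (p ⟨i, hi⟩) (p ⟨j, hj⟩) :=
    (hp.2 _ _).not.2 (by simp only; omega)
  refine ⟨v, p ⟨0, by omega⟩, p ⟨2, by omega⟩, p ⟨4, by omega⟩, v, p ⟨0, by omega⟩,
    p ⟨1, by omega⟩, ⟨hne _ _ (by omega), hne _ _ (by omega), hne _ _ (by omega), hadj _, hadj _,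
      hadj _, hnadj _ _ le_rfl, hnadj _ _ (by omega), hnadj _ _ le_rfl⟩,
    ⟨hadj _, hadj _, (hp.2 _ _).2 (Or.inl rfl)⟩, v, by simp⟩

end

/-- A cycle v-u₀-⋯-u_{m-1}-v of length at least 6 whose part u₀-⋯-u_{m-1}
is an induced path yields an induced cycle of length ≥ 4 or an intersecting
claw-triangle pair. -/
theorem stmt2 {V : Type*} (G : SimpleGraph V) (v : V) {m : ℕ} (u : Fin m → V)
    (hm : 5 ≤ m)
    (hpath : IsInducedPathFun G u)
    (hv : ∀ i, v ≠ u i)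
    (h0 : G.Adj v (u ⟨0, by omega⟩))
    (hl : G.Adj v (u ⟨m - 1, by omega⟩)) :
    (∃ n : ℕ, 4 ≤ n ∧ ∃ c : Fin n → V, IsInducedCycle G c) ∨
    (∃ w a b c x y z : V, IsClaw G w a b c ∧ IsTriangle G x y z ∧
      (({w, a, b, c} : Set V) ∩ {x, y, z}).Nonempty) := by
  by_cases hall : ∀ i, G.Adj v (u i)
  · exact .inr (hpath.exists_claw_triangle_of_forall_adj hm hall)
  obtain ⟨⟨k, hk⟩, hkv⟩ := not_forall.1 hall
  obtain ⟨a, b, hak, hkb, ⟨_, hva⟩, ⟨hb, hvb⟩, hgap⟩ :=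
    Nat.exists_gap_around (P := fun j => ∃ h : j < m, G.Adj v (u ⟨j, h⟩)) ⟨_, h0⟩ k.zero_le
      (fun ⟨_, h⟩ => hkv h) ⟨_, hl⟩ (by omega)
  refine .inl ⟨b - a + 1 + 1, by omega, _,
    (hpath.segment a (b - a + 1) (by omega)).isInducedCycle_cons (by omega) (fun _ => hv _)
      fun i => ⟨fun hi => ?_, ?_⟩⟩
  · by_contra hend
    exact hgap (a + i) (by omega) (by omega) ⟨_, hi⟩
  · rintro (hi | hi)
    · simpa [hi] using hva
    · convert hvb using 4
      omega
end

section
/- Let G be a graph whose every connected component is a proper interval graph or a tree, let v be a vertex of G of degree exactly 1, and let G' be obtained from G by attaching a new path u_1, u_2, ..., u_l where u_1 is joined to v by an edge. Then every connected component of G' is a proper interval graph or a tree. -/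
open SimpleGraph

/-- Attach a degree-2-tail of length l at the vertex v. -/
def attachTail {V : Type*} (G : SimpleGraph V) (v : V) (l : ℕ) :
    SimpleGraph (V ⊕ Fin l) :=
  SimpleGraph.fromRel (fun x y =>
    match x, y with
    | Sum.inl a, Sum.inl b => G.Adj a b
    | Sum.inl a, Sum.inr i => a = v ∧ i.val = 0
    | Sum.inr _, Sum.inl _ => False
    | Sum.inr i, Sum.inr j => j.val = i.val + 1)

/-!
Components of the new graph avoiding `v` are copies of components of `G`, and the component of `v`
is its old component with the tail attached, so it suffices to attach a tail to a connected graph.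

For a tree, give the `i`-th tail vertex height `i + 1` and the old vertices height `0`. A cycle
through the tail would have, at a vertex of maximal height, two distinct neighbours that are not
higher; but every tail vertex has only one such neighbour.

For a unit interval model `f`, reflect so that `f w ≤ f v` for the unique neighbour `w` of `v`.
Every other vertex is then to the left of `v`: a walk cannot jump over `v` without passing within
distance `1` of it. Moving `v` to `f w + 1` and the tail to `f w + 2, f w + 3, …` gives a unit
interval model of the extended graph.
-/

section AttachTail

variable {V : Type*} {G : SimpleGraph V} {v : V} {l : ℕ}

@[simp]
lemma attachTail_adj_inl_inl {a b : V} :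
    (attachTail G v l).Adj (.inl a) (.inl b) ↔ G.Adj a b := by
  simp only [attachTail, fromRel_adj, ne_eq, Sum.inl.injEq]
  exact ⟨fun h => h.2.elim id fun h => h.symm, fun h => ⟨h.ne, .inl h⟩⟩

@[simp]
lemma attachTail_adj_inl_inr {a : V} {i : Fin l} :
    (attachTail G v l).Adj (.inl a) (.inr i) ↔ a = v ∧ (i : ℕ) = 0 := by
  simp [attachTail]

@[simp]
lemma attachTail_adj_inr_inl {a : V} {i : Fin l} :
    (attachTail G v l).Adj (.inr i) (.inl a) ↔ a = v ∧ (i : ℕ) = 0 := by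
  simp [attachTail]

@[simp]
lemma attachTail_adj_inr_inr {i j : Fin l} :
    (attachTail G v l).Adj (.inr i) (.inr j) ↔ (j : ℕ) = i + 1 ∨ (i : ℕ) = j + 1 := by
  simp only [attachTail, fromRel_adj, ne_eq, Sum.inr.injEq, Fin.ext_iff]
  omega

variable (G v l) in
def embeddingAttachTail : G ↪g attachTail G v l :=
  ⟨Function.Embedding.inl, attachTail_adj_inl_inl⟩

variable (v) in
def collapseTail : V ⊕ Fin l → V :=
  Sum.elim id fun _ => v

lemma reachable_attachTail_inr_inl (i : Fin l) :
    (attachTail G v l).Reachable (.inr i) (.inl v) := by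
  obtain ⟨n, hn⟩ := i
  induction n with
  | zero => exact Adj.reachable (by simp)
  | succ n ih => exact (Adj.reachable (by simp)).trans (ih (by omega))

lemma reachable_attachTail_iff {x y : V ⊕ Fin l} :
    (attachTail G v l).Reachable x y ↔ G.Reachable (collapseTail v x) (collapseTail v y) := by
  constructor
  · rw [reachable_iff_reflTransGen, reachable_iff_reflTransGen]
    refine fun h => Relation.ReflTransGen.lift' (collapseTail v) (fun a b hab => ?_) _ _ h
    rcases a with a | i <;> rcases b with b | j <;>
      simp_all [collapseTail, Function.onFun, Relation.ReflTransGen.refl,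
        Relation.ReflTransGen.single]
  · have hlift {a b : V} (h : G.Reachable a b) : (attachTail G v l).Reachable (.inl a) (.inl b) :=
      h.map (embeddingAttachTail G v l).toHom
    have hinr (i : Fin l) := reachable_attachTail_inr_inl (G := G) (v := v) i
    rcases x with a | i <;> rcases y with b | j <;> intro h
    · exact hlift h
    · exact (hlift h).trans (hinr j).symm
    · exact (hinr i).trans (hlift h)
    · exact (hinr i).trans (hinr j).symm

lemma supp_connectedComponentMk_attachTail (x : V ⊕ Fin l) :
    ((attachTail G v l).connectedComponentMk x).supp =
      collapseTail v ⁻¹' (G.connectedComponentMk (collapseTail v x)).supp := by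
  ext y
  simp [ConnectedComponent.eq, reachable_attachTail_iff]

def induceAttachTailIso (s : Set V) (hv : v ∈ s) :
    (attachTail G v l).induce (collapseTail v ⁻¹' s) ≃g attachTail (G.induce s) ⟨v, hv⟩ l where
  toFun
    | ⟨.inl a, ha⟩ => .inl ⟨a, ha⟩
    | ⟨.inr i, _⟩ => .inr i
  invFun := Sum.elim (fun a => ⟨.inl a, a.2⟩) fun i => ⟨.inr i, hv⟩
  left_inv := by rintro ⟨a | i, h⟩ <;> rfl
  right_inv := by rintro (a | i) <;> rfl
  map_rel_iff' := by
    rintro ⟨a | i, ha⟩ ⟨b | j, hb⟩ <;> simp [Subtype.ext_iff]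

def induceAttachTailIsoOfNotMem (s : Set V) (hv : v ∉ s) :
    (attachTail G v l).induce (collapseTail v ⁻¹' s) ≃g G.induce s where
  toFun x := ⟨collapseTail v x.1, x.2⟩
  invFun a := ⟨.inl a, a.2⟩
  left_inv := by
    rintro ⟨a | i, h⟩
    · rfl
    · exact absurd h hv
  right_inv _ := rfl
  map_rel_iff' := by
    rintro ⟨a | i, ha⟩ ⟨b | j, hb⟩
    · exact (attachTail_adj_inl_inl (G := G) (v := v) (l := l) (a := a) (b := b)).symm
    all_goals first | exact absurd ha hv | exact absurd hb hv

end AttachTail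

lemma SimpleGraph.ConnectedComponent.ncard_neighborSet_induce_supp {V : Type*} {G : SimpleGraph V}
    (C : G.ConnectedComponent) {v : V} (hv : v ∈ C.supp) :
    ((G.induce C.supp).neighborSet ⟨v, hv⟩).ncard = (G.neighborSet v).ncard := by
  rw [neighborSet_induce]
  exact Set.ncard_preimage_of_injective_subset_range Subtype.val_injective
    fun w hw => ⟨⟨w, C.mem_supp_of_adj_mem_supp hv hw⟩, rfl⟩

section ProperInterval

variable {W W' : Type*} {H : SimpleGraph W} {H' : SimpleGraph W'}

/-- `IsProperIntervalGraph H` unfolds to `∃ f, IsUnitIntervalModel H f`. -/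
def IsUnitIntervalModel (H : SimpleGraph W) (f : W → ℝ) : Prop :=
  ∀ u w, u ≠ w → (H.Adj u w ↔ |f u - f w| ≤ 1)

lemma SimpleGraph.Iso.isProperIntervalGraph_iff (e : H ≃g H') :
    IsProperIntervalGraph H ↔ IsProperIntervalGraph H' := by
  refine ⟨fun ⟨f, hf⟩ => ⟨f ∘ e.symm, fun u w huw => ?_⟩,
    fun ⟨f, hf⟩ => ⟨f ∘ e, fun u w huw => ?_⟩⟩
  · rw [← e.symm.map_adj_iff]
    exact hf _ _ (e.symm.injective.ne huw)
  · rw [← e.map_adj_iff]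
    exact hf _ _ (e.injective.ne huw)

namespace IsUnitIntervalModel

variable {f : W → ℝ}

lemma neg (hf : IsUnitIntervalModel H f) : IsUnitIntervalModel H (-f) := fun u w huw => by
  rw [hf u w huw, Pi.neg_apply, Pi.neg_apply, neg_sub_neg, abs_sub_comm]

lemma le_of_neighborSet_eq_singleton (hf : IsUnitIntervalModel H f) (hH : H.Connected)
    {v w : W} (hvw : H.neighborSet v = {w}) (hwv : f w ≤ f v) (b : W) : f b ≤ f v := by
  have hclosed (a c : W) (hac : H.Adj a c) (ha : f a ≤ f v) : f c ≤ f v := by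
    by_contra! hc
    have hcw : c ≠ w := by rintro rfl; linarith
    have hvc : ¬ H.Adj v c := fun h => hcw (by rwa [← mem_neighborSet, hvw] at h)
    rw [hf v c (by rintro rfl; linarith), abs_le] at hvc
    have hac' := abs_le.mp ((hf a c hac.ne).mp hac)
    exact hvc ⟨by linarith, by linarith⟩
  induction (reachable_iff_reflTransGen _ _).mp (hH.preconnected v b) with
  | refl => exact le_rfl
  | tail _ hbc ih => exact hclosed _ _ hbc ih

lemma exists_le_sub_one_of_neighborSet_eq_singleton (hf : IsUnitIntervalModel H f)
    (hH : H.Connected) {v w : W} (hvw : H.neighborSet v = {w}) :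
    ∃ g, IsUnitIntervalModel H g ∧ ∀ b ≠ v, g b ≤ g v - 1 := by
  classical
  wlog hwv : f w ≤ f v generalizing f
  · exact this hf.neg (by simp only [Pi.neg_apply]; linarith)
  have hadj {b : W} : H.Adj v b ↔ b = w := by rw [← mem_neighborSet, hvw, Set.mem_singleton_iff]
  have hvw_dist := abs_le.mp ((hf v w (hadj.mpr rfl).ne).mp (hadj.mpr rfl))
  have hfar (b : W) (hbv : b ≠ v) (hbw : b ≠ w) : f b < f w := by
    have hnear := (hf v b hbv.symm).not.mp (hbw ∘ hadj.mp)
    rw [abs_le, not_and_or, not_le, not_le] at hnear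
    have := hf.le_of_neighborSet_eq_singleton hH hvw hwv b
    rcases hnear with h | h <;> linarith
  refine ⟨Function.update f v (f w + 1), fun a b hab => ?_, fun b hbv => ?_⟩
  · have hmove (b : W) (hbv : b ≠ v) : H.Adj v b ↔ |f w + 1 - f b| ≤ 1 := by
      rw [hadj, abs_le]
      constructor
      · rintro rfl; constructor <;> linarith
      · intro h; by_contra hbw; linarith [hfar b hbv hbw, h.1]
    by_cases hav : a = v
    · subst hav
      simpa [Function.update_of_ne hab.symm] using hmove b hab.symm
    by_cases hbv : b = v
    · subst hbv
      simpa [Function.update_of_ne hav, adj_comm, abs_sub_comm] using hmove a hav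
    simpa [Function.update_of_ne hav, Function.update_of_ne hbv] using hf a b hab
  · rw [Function.update_self, Function.update_of_ne hbv]
    by_cases hbw : b = w
    · subst hbw; linarith
    · linarith [hfar b hbv hbw]

variable (l) in
lemma attachTail {v : W} (hf : IsUnitIntervalModel H f) (hv : ∀ b ≠ v, f b ≤ f v - 1) :
    IsUnitIntervalModel (attachTail H v l) (Sum.elim f fun i => f v + 1 + i) := by
  have hinl (a : W) (i : Fin l) : a = v ∧ (i : ℕ) = 0 ↔ |f a - (f v + 1 + i)| ≤ 1 := by
    by_cases hav : a = v
    · subst hav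
      rw [abs_le]
      simp only [true_and]
      constructor
      · intro h; simp [h]
      · intro h
        exact Nat.eq_zero_of_le_zero (by exact_mod_cast (show (i : ℝ) ≤ 0 by linarith [h.1]))
    · simp only [hav, false_and, false_iff, abs_le, not_and_or, not_le]
      left; linarith [hv a hav]
  rintro (a | i) (b | j) hne
  · simpa using hf a b (by simpa using hne)
  · simpa using hinl a j
  · simpa [abs_sub_comm] using hinl b i
  · have hij : (i : ℕ) ≠ j := fun h => hne (by rw [Fin.ext h])
    simp only [attachTail_adj_inr_inr, Sum.elim_inr, add_sub_add_left_eq_sub, abs_le]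
    constructor
    · rintro (h | h) <;> constructor <;> push_cast [h] <;> linarith
    · rintro ⟨h₁, h₂⟩
      have : (j : ℕ) ≤ i + 1 := by exact_mod_cast (show (j : ℝ) ≤ i + 1 by linarith)
      have : (i : ℕ) ≤ j + 1 := by exact_mod_cast (show (i : ℝ) ≤ j + 1 by linarith)
      omega

end IsUnitIntervalModel

theorem IsProperIntervalGraph.attachTail (hpig : IsProperIntervalGraph H) (hH : H.Connected)
    {v : W} (hv : (H.neighborSet v).ncard = 1) (l : ℕ) :
    IsProperIntervalGraph (attachTail H v l) := by
  obtain ⟨w, hw⟩ := Set.ncard_eq_one.mp hv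
  obtain ⟨f, hf⟩ := hpig
  obtain ⟨g, hg, hgv⟩ := IsUnitIntervalModel.exists_le_sub_one_of_neighborSet_eq_singleton hf hH hw
  exact ⟨_, hg.attachTail l hgv⟩

end ProperInterval

section Acyclic

variable {V : Type*} {G : SimpleGraph V}

lemma SimpleGraph.Walk.IsCycle.induce {u : V} {p : G.Walk u u} (hp : p.IsCycle) {s : Set V}
    (hs : ∀ x ∈ p.support, x ∈ s) : (p.induce s hs).IsCycle := by
  rw [← isCycle_map_iff_of_injective (f := (Embedding.induce s).toHom) Subtype.val_injective,
    map_induce]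
  exact hp

variable {h : V → ℕ}
  (hh : ∀ ⦃x y z⦄, G.Adj x y → G.Adj x z → h y ≤ h x → h z ≤ h x → 0 < h x → y = z)
include hh

lemma SimpleGraph.Walk.IsCycle.height_eq_zero {u : V} {p : G.Walk u u} (hp : p.IsCycle) :
    ∀ x ∈ p.support, h x = 0 := by
  classical
  obtain ⟨x, hx, hmax⟩ := p.support.toFinset.exists_max_image h ⟨u, by simp⟩
  rw [List.mem_toFinset] at hx
  suffices h x = 0 from fun y hy => by have := hmax y (List.mem_toFinset.mpr hy); omega
  by_contra hpos
  have hq := hp.rotate hx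
  have hle (y : V) (hy : y ∈ (p.rotate x hx).support) : h y ≤ h x :=
    hmax y (by simpa using hy)
  exact hq.snd_ne_penultimate <| hh ((p.rotate x hx).adj_snd hq.not_nil)
    ((p.rotate x hx).adj_penultimate hq.not_nil).symm (hle _ (getVert_mem_support ..))
    (hle _ (getVert_mem_support ..)) (Nat.pos_of_ne_zero hpos)

lemma SimpleGraph.isAcyclic_of_isAcyclic_induce_height_eq_zero
    (h0 : (G.induce {x | h x = 0}).IsAcyclic) : G.IsAcyclic :=
  fun _ _ hp => h0 _ (hp.induce (hp.height_eq_zero hh))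

end Acyclic

theorem SimpleGraph.IsTree.attachTail {W : Type*} {H : SimpleGraph W} (hH : H.IsTree) (v : W)
    (l : ℕ) : (attachTail H v l).IsTree where
  connected := (connected_iff_exists_forall_reachable _).mpr
    ⟨.inl v, fun _ => reachable_attachTail_iff.mpr (hH.connected _ _)⟩
  isAcyclic := by
    refine isAcyclic_of_isAcyclic_induce_height_eq_zero
      (h := Sum.elim (fun _ => 0) fun i => i + 1) ?_ ?_
    · rintro (a | i) (b | j) (c | k) <;> simp [Fin.ext_iff] <;> grind
    · have hrange : {x : W ⊕ Fin l | Sum.elim (fun _ => 0) (fun i : Fin l => (i : ℕ) + 1) x = 0} =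
          Set.range Sum.inl := by
        ext (a | i) <;> simp
      rw [hrange]
      exact (embeddingAttachTail H v l).isoInduceRange.isAcyclic_iff.mp hH.isAcyclic

theorem stmt6_general {V : Type*} (G : SimpleGraph V) (v : V) (l : ℕ)
    (hdeg : (G.neighborSet v).ncard = 1)
    (hG : ComponentsPIGOrTree G) :
    ComponentsPIGOrTree (attachTail G v l) := by
  intro c
  induction c using ConnectedComponent.ind with | _ x => ?_
  set D := G.connectedComponentMk (collapseTail v x)
  rw [supp_connectedComponentMk_attachTail]
  by_cases hv : v ∈ D.supp
  · let e := induceAttachTailIso (G := G) (l := l) D.supp hv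
    rw [e.isProperIntervalGraph_iff, e.isTree_iff]
    exact (hG D).imp
      (·.attachTail D.connected_toSimpleGraph (by rwa [D.ncard_neighborSet_induce_supp hv]) l)
      (·.attachTail _ l)
  · let e := induceAttachTailIsoOfNotMem (G := G) (l := l) D.supp hv
    rw [e.isProperIntervalGraph_iff, e.isTree_iff]
    exact hG D

/-- Attaching a degree-2-tail at a pendant vertex preserves the property that
every connected component is a proper interval graph or a tree. -/
theorem stmt6 {V : Type*} (G : SimpleGraph V) (v : V) (l : ℕ) (hl : 1 ≤ l)
    (hdeg : (G.neighborSet v).ncard = 1)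
    (hG : ComponentsPIGOrTree G) :
    ComponentsPIGOrTree (attachTail G v l) :=
  stmt6_general G v l hdeg hG
end

section
/- Let G be a graph, let P = (v_1, ..., v_l) be a path in G in which every internal vertex has degree exactly 2 in G, and additionally suppose v_2 and v_{l-1} also have degree exactly 2 in G. Then no induced claw of G contains any of the vertices v_3, ..., v_{l-2}. -/
open SimpleGraph

lemma deg2_aux {V : Type*} (G : SimpleGraph V) {v a b c : V}
    (h : (G.neighborSet v).ncard = 2) (hab : a ≠ b) (hac : a ≠ c) (hbc : b ≠ c)
    (ha : G.Adj v a) (hb : G.Adj v b) (hc : G.Adj v c) : False := by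
  have hfin : (G.neighborSet v).Finite := by
    rcases Set.finite_or_infinite (G.neighborSet v) with hf | hf
    · exact hf
    · rw [hf.ncard] at h; omega
  have hsub : ({a, b, c} : Set V) ⊆ G.neighborSet v := by
    intro x hx
    simp only [Set.mem_insert_iff, Set.mem_singleton_iff] at hx
    rcases hx with rfl | rfl | rfl <;> assumption
  have h3 : ({a, b, c} : Set V).ncard = 3 := by
    rw [Set.ncard_insert_of_notMem (by simp [hab, hac]), Set.ncard_pair hbc]
  have := Set.ncard_le_ncard hsub hfin
  omega

/-- If all internal vertices of a path (including the second and second-to-last)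
have degree exactly 2 in G, then no induced claw of G meets v₃,…,v_{l-2}. -/
theorem stmt8 {V : Type*} (G : SimpleGraph V) {l : ℕ} (p : Fin l → V)
    (hinj : Function.Injective p)
    (hadj : ∀ i : Fin l, ∀ h : i.val + 1 < l, G.Adj (p i) (p ⟨i.val + 1, h⟩))
    (hdeg : ∀ i : Fin l, 0 < i.val → i.val < l - 1 → (G.neighborSet (p i)).ncard = 2) :
    ∀ w a b c : V, IsClaw G w a b c →
      ∀ i : Fin l, 2 ≤ i.val → i.val ≤ l - 3 →
        p i ∉ ({w, a, b, c} : Set V) := by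
  intro w a b c hclaw i h2 h3 hmem
  obtain ⟨hab, hac, hbc, hwa, hwb, hwc, -, -, -⟩ := hclaw
  have hlt := i.isLt
  have hl5 : 5 ≤ l := by omega
  have key : ∀ j k : Fin l, j.val + 1 = k.val → G.Adj (p j) (p k) := by
    intro j k hjk
    have h' : j.val + 1 < l := by omega
    have hk : (⟨j.val + 1, h'⟩ : Fin l) = k := Fin.ext hjk
    have := hadj j h'
    rwa [hk] at this
  set i1 : Fin l := ⟨i.val - 1, by omega⟩ with hi1
  set i2 : Fin l := ⟨i.val + 1, by omega⟩ with hi2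
  have ha1 : G.Adj (p i) (p i1) := (key i1 i (by simp [hi1]; omega)).symm
  have ha2 : G.Adj (p i) (p i2) := key i i2 rfl
  have hne12 : p i1 ≠ p i2 := by
    intro h
    have := hinj h
    rw [Fin.ext_iff] at this
    simp only [hi1, hi2] at this
    omega
  have hNi : (G.neighborSet (p i)).ncard = 2 := hdeg i (by omega) (by omega)
  -- p i cannot be the center
  have hnotw : p i ≠ w := by
    rintro rfl
    exact deg2_aux G hNi hab hac hbc hwa hwb hwc
  -- p i cannot be a leaf
  have hleaf : ∀ x : V, G.Adj w x → p i ≠ x := by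
    intro x hwx hx
    subst hx
    -- w is a neighbor of p i, so w = p i1 or w = p i2
    have hfin : (G.neighborSet (p i)).Finite := by
      rcases Set.finite_or_infinite (G.neighborSet (p i)) with hf | hf
      · exact hf
      · rw [hf.ncard] at hNi; omega
    have hsub : ({p i1, p i2} : Set V) ⊆ G.neighborSet (p i) := by
      intro y hy
      rcases hy with rfl | rfl
      · exact ha1
      · exact ha2
    have heq : ({p i1, p i2} : Set V) = G.neighborSet (p i) :=
      Set.eq_of_subset_of_ncard_le hsub (by rw [hNi, Set.ncard_pair hne12]) hfin
    have hwmem : w ∈ G.neighborSet (p i) := hwx.symm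
    rw [← heq] at hwmem
    rcases hwmem with hw1 | hw2
    · have : (G.neighborSet w).ncard = 2 := by
        rw [hw1]; exact hdeg i1 (by simp [hi1]; omega) (by simp [hi1]; omega)
      exact deg2_aux G this hab hac hbc hwa hwb hwc
    · have hw2' : w = p i2 := hw2
      have : (G.neighborSet w).ncard = 2 := by
        rw [hw2']; exact hdeg i2 (by simp [hi2]) (by simp [hi2]; omega)
      exact deg2_aux G this hab hac hbc hwa hwb hwc
  rcases hmem with h | h | h | h
  · exact hnotw h
  · exact hleaf a hwa h
  · exact hleaf b hwb h
  · exact hleaf c hwc h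
end

section
/- Let G be a simple graph, S ⊆ V(G), and suppose G − S is a forest. Let v ∈ S, and suppose G[{v} ∪ (V(G)∖S)] contains 3k + 3 triangles C_1, ..., C_{3k+3} all passing through v and pairwise intersecting only in v. Then G contains k + 1 pairs (J_1, T_1), ..., (J_{k+1}, T_{k+1}) where each J_i is an induced claw centered at v, each T_i is a triangle containing v, and for i ≠ j, (V(J_i) ∪ V(T_i)) ∩ (V(J_j) ∪ V(T_j)) = {v}. -/
open SimpleGraph

lemma no_tri {W : Type*} {H : SimpleGraph W} (hac : H.IsAcyclic)
    {x y z : W} (hxy : H.Adj x y) (hyz : H.Adj y z) (hxz : H.Adj x z) : False := by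
  have h := congrArg (fun p : H.Path x z => p.1.support)
    (hac.path_unique ⟨Walk.cons hxz Walk.nil, by simp [hxz.ne]⟩
      ⟨Walk.cons hxy (Walk.cons hyz Walk.nil), by simp [hxy.ne, hyz.ne, hxz.ne]⟩)
  simp [Walk.support_cons] at h

lemma no_c4 {W : Type*} {H : SimpleGraph W} (hac : H.IsAcyclic)
    {x y z w : W} (hxy : H.Adj x y) (hyz : H.Adj y z) (hzw : H.Adj z w)
    (hwx : H.Adj w x) (hxz : x ≠ z) (hyw : y ≠ w) : False := by
  have h := congrArg (fun p : H.Path x z => p.1.support)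
    (hac.path_unique
      ⟨Walk.cons hxy (Walk.cons hyz Walk.nil), by simp [hxy.ne, hyz.ne, hxz]⟩
      ⟨Walk.cons hwx.symm (Walk.cons hzw.symm Walk.nil), by
        simp [hwx.ne', hzw.ne', hxz, hwx.ne]⟩)
  simp [Walk.support_cons] at h
  exact hyw h

lemma no_c6 {W : Type*} {H : SimpleGraph W} (hac : H.IsAcyclic)
    {u1 u2 u3 u4 u5 u6 : W}
    (h12 : H.Adj u1 u2) (h23 : H.Adj u2 u3) (h34 : H.Adj u3 u4)
    (h45 : H.Adj u4 u5) (h56 : H.Adj u5 u6) (h61 : H.Adj u6 u1)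
    (h13 : u1 ≠ u3) (h14 : u1 ≠ u4) (h24 : u2 ≠ u4)
    (h15 : u1 ≠ u5) (h46 : u4 ≠ u6) (h26 : u2 ≠ u6) : False := by
  have h := congrArg (fun p : H.Path u1 u4 => p.1.support)
    (hac.path_unique
      ⟨Walk.cons h12 (Walk.cons h23 (Walk.cons h34 Walk.nil)), by
        simp [h12.ne, h23.ne, h34.ne, h13, h14, h24]⟩
      ⟨Walk.cons h61.symm (Walk.cons h56.symm (Walk.cons h45.symm Walk.nil)), by
        simp [h61.ne', h56.ne', h45.ne', h15, h14, h46.symm, h61.ne]⟩)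
  simp [Walk.support_cons] at h
  exact h26 h.1
lemma pair_adj {W : Type*} {H : SimpleGraph W} {a b x y : W} (hab : H.Adj a b)
    (hx : x = a ∨ x = b) (hy : y = a ∨ y = b) (hne : x ≠ y) : H.Adj x y := by
  rcases hx with rfl | rfl <;> rcases hy with rfl | rfl <;>
    first | exact absurd rfl hne | exact hab | exact hab.symm

lemma cross_unique {W : Type*} {H : SimpleGraph W} (hac : H.IsAcyclic)
    {a b c d x y x' y' : W} (hab : H.Adj a b) (hcd : H.Adj c d)
    (hACne : a ≠ c) (hADne : a ≠ d) (hBCne : b ≠ c) (hBDne : b ≠ d)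
    (hx : x = a ∨ x = b) (hy : y = c ∨ y = d)
    (hx' : x' = a ∨ x' = b) (hy' : y' = c ∨ y' = d)
    (e : H.Adj x y) (e' : H.Adj x' y') : x = x' ∧ y = y' := by
  have hxy' : x ≠ y' := by rcases hx with rfl | rfl <;> rcases hy' with rfl | rfl <;> assumption
  have hx'y : x' ≠ y := by
    rcases hx' with rfl | rfl <;> rcases hy with rfl | rfl <;>
      first | exact hACne | exact hADne | exact hBCne | exact hBDne
  have hxx' : x = x' := by
    by_contra hne
    have hadj : H.Adj x x' := pair_adj hab hx hx' hne
    by_cases hyy : y = y'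
    · exact no_tri hac hadj (hyy ▸ e') e
    · have hyadj : H.Adj y y' := pair_adj hcd hy hy' hyy
      exact no_c4 hac e hyadj e'.symm hadj.symm hxy' (Ne.symm hx'y)
  subst hxx'
  refine ⟨rfl, ?_⟩
  by_contra hyy
  exact no_tri hac (pair_adj hcd hy hy' hyy) e'.symm e.symm

lemma pick3 {W : Type*} {H : SimpleGraph W} (hac : H.IsAcyclic)
    {a1 b1 a2 b2 a3 b3 : W}
    (h1 : H.Adj a1 b1) (h2 : H.Adj a2 b2) (h3 : H.Adj a3 b3)
    (d12 : ∀ x y, (x = a1 ∨ x = b1) → (y = a2 ∨ y = b2) → x ≠ y)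
    (d13 : ∀ x y, (x = a1 ∨ x = b1) → (y = a3 ∨ y = b3) → x ≠ y)
    (d23 : ∀ x y, (x = a2 ∨ x = b2) → (y = a3 ∨ y = b3) → x ≠ y) :
    ∃ x1 x2 x3, (x1 = a1 ∨ x1 = b1) ∧ (x2 = a2 ∨ x2 = b2) ∧ (x3 = a3 ∨ x3 = b3) ∧
      ¬H.Adj x1 x2 ∧ ¬H.Adj x1 x3 ∧ ¬H.Adj x2 x3 := by
  -- helper: from an adjacent pair, one endpoint avoids a given target
  have avoid : ∀ {p q t : W}, H.Adj p q → ∃ x, (x = p ∨ x = q) ∧ ¬H.Adj x t := by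
    intro p q t hpq
    by_cases hp : H.Adj p t
    · exact ⟨q, Or.inr rfl, fun hq => no_tri hac hpq hq hp⟩
    · exact ⟨p, Or.inl rfl, hp⟩
  by_cases E12 : ∃ x y, (x = a1 ∨ x = b1) ∧ (y = a2 ∨ y = b2) ∧ H.Adj x y
  · by_cases E13 : ∃ x y, (x = a1 ∨ x = b1) ∧ (y = a3 ∨ y = b3) ∧ H.Adj x y
    · by_cases E23 : ∃ x y, (x = a2 ∨ x = b2) ∧ (y = a3 ∨ y = b3) ∧ H.Adj x y
      · obtain ⟨p1, p2, hp1, hp2, e12⟩ := E12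
        obtain ⟨q1, q3, hq1, hq3, e13⟩ := E13
        obtain ⟨q2, p3, hq2, hp3, e23⟩ := E23
        have u12 : ∀ x y, (x = a1 ∨ x = b1) → (y = a2 ∨ y = b2) → H.Adj x y →
            x = p1 ∧ y = p2 := fun x y hx hy e => cross_unique hac h1 h2
          (d12 _ _ (Or.inl rfl) (Or.inl rfl)) (d12 _ _ (Or.inl rfl) (Or.inr rfl))
          (d12 _ _ (Or.inr rfl) (Or.inl rfl)) (d12 _ _ (Or.inr rfl) (Or.inr rfl))
          hx hy hp1 hp2 e e12
        have u13 : ∀ x y, (x = a1 ∨ x = b1) → (y = a3 ∨ y = b3) → H.Adj x y →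
            x = q1 ∧ y = q3 := fun x y hx hy e => cross_unique hac h1 h3
          (d13 _ _ (Or.inl rfl) (Or.inl rfl)) (d13 _ _ (Or.inl rfl) (Or.inr rfl))
          (d13 _ _ (Or.inr rfl) (Or.inl rfl)) (d13 _ _ (Or.inr rfl) (Or.inr rfl))
          hx hy hq1 hq3 e e13
        have u23 : ∀ x y, (x = a2 ∨ x = b2) → (y = a3 ∨ y = b3) → H.Adj x y →
            x = q2 ∧ y = p3 := fun x y hx hy e => cross_unique hac h2 h3
          (d23 _ _ (Or.inl rfl) (Or.inl rfl)) (d23 _ _ (Or.inl rfl) (Or.inr rfl))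
          (d23 _ _ (Or.inr rfl) (Or.inl rfl)) (d23 _ _ (Or.inr rfl) (Or.inr rfl))
          hx hy hq2 hp3 e e23
        -- "other" vertices
        obtain ⟨o1, ho1, ho1ne⟩ : ∃ o, (o = a1 ∨ o = b1) ∧ o ≠ p1 := by
          rcases hp1 with rfl | rfl
          · exact ⟨b1, Or.inr rfl, h1.ne'⟩
          · exact ⟨a1, Or.inl rfl, h1.ne⟩
        obtain ⟨o2, ho2, ho2ne⟩ : ∃ o, (o = a2 ∨ o = b2) ∧ o ≠ q2 := by
          rcases hq2 with rfl | rfl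
          · exact ⟨b2, Or.inr rfl, h2.ne'⟩
          · exact ⟨a2, Or.inl rfl, h2.ne⟩
        obtain ⟨o3, ho3, ho3ne⟩ : ∃ o, (o = a3 ∨ o = b3) ∧ o ≠ p3 := by
          rcases hp3 with rfl | rfl
          · exact ⟨b3, Or.inr rfl, h3.ne'⟩
          · exact ⟨a3, Or.inl rfl, h3.ne⟩
        by_cases h11 : p1 = q1
        · -- x1 := o1 avoids everything on pair 1 side
          refine ⟨o1, o2, a3, ho1, ho2, Or.inl rfl, ?_, ?_, ?_⟩
          · exact fun e => ho1ne (u12 _ _ ho1 ho2 e).1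
          · exact fun e => ho1ne ((u13 _ _ ho1 (Or.inl rfl) e).1.trans h11.symm)
          · exact fun e => ho2ne (u23 _ _ ho2 (Or.inl rfl) e).1
        · by_cases h22 : p2 = q2
          · refine ⟨p1, o2, a3, hp1, ho2, Or.inl rfl, ?_, ?_, ?_⟩
            · exact fun e => ho2ne ((u12 _ _ hp1 ho2 e).2.trans h22)
            · exact fun e => h11 (u13 _ _ hp1 (Or.inl rfl) e).1
            · exact fun e => ho2ne (u23 _ _ ho2 (Or.inl rfl) e).1
          · by_cases h33 : p3 = q3
            · refine ⟨q1, a2, o3, hq1, Or.inl rfl, ho3, ?_, ?_, ?_⟩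
              · exact fun e => h11 (u12 _ _ hq1 (Or.inl rfl) e).1.symm
              · exact fun e => ho3ne ((u13 _ _ hq1 ho3 e).2.trans h33.symm)
              · exact fun e => ho3ne (u23 _ _ (Or.inl rfl) ho3 e).2
            · -- 6-cycle p1 p2 q2 p3 q3 q1
              exfalso
              have hA : H.Adj p2 q2 := pair_adj h2 hp2 hq2 h22
              have hB : H.Adj p3 q3 := pair_adj h3 hp3 hq3 h33
              have hC : H.Adj q1 p1 := pair_adj h1 hq1 hp1 fun h => h11 h.symm
              exact no_c6 hac e12 hA e23 hB e13.symm hC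
                (d12 _ _ hp1 hq2) (d13 _ _ hp1 hp3) (d23 _ _ hp2 hp3)
                (d13 _ _ hp1 hq3) (Ne.symm (d13 _ _ hq1 hp3)) (Ne.symm (d12 _ _ hq1 hp2))
      · push_neg at E23
        obtain ⟨x2, hx2, hx2a⟩ := avoid (t := a1) h2
        obtain ⟨x3, hx3, hx3a⟩ := avoid (t := a1) h3
        exact ⟨a1, x2, x3, Or.inl rfl, hx2, hx3,
          fun e => hx2a e.symm, fun e => hx3a e.symm, E23 x2 x3 hx2 hx3⟩
    · push_neg at E13
      obtain ⟨x1, hx1, hx1a⟩ := avoid (t := a2) h1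
      obtain ⟨x3, hx3, hx3a⟩ := avoid (t := a2) h3
      exact ⟨x1, a2, x3, hx1, Or.inl rfl, hx3,
        hx1a, E13 x1 x3 hx1 hx3, fun e => hx3a e.symm⟩
  · push_neg at E12
    obtain ⟨x1, hx1, hx1a⟩ := avoid (t := a3) h1
    obtain ⟨x2, hx2, hx2a⟩ := avoid (t := a3) h2
    exact ⟨x1, x2, a3, hx1, hx2, Or.inl rfl, E12 x1 x2 hx1 hx2, hx1a, hx2a⟩

/-- From 3k+3 triangles through v (pairwise meeting only at v, other vertices
in the forest G - S) one gets k+1 claw-triangle pairs pairwise meeting only at v. -/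
theorem stmt12 {V : Type*} (G : SimpleGraph V) (S : Set V)
    (hforest : (G.induce Sᶜ).IsAcyclic)
    (v : V) (hv : v ∈ S) (k : ℕ)
    (a b : Fin (3 * k + 3) → V)
    (ha : ∀ i, a i ∉ S) (hb : ∀ i, b i ∉ S)
    (htri : ∀ i, IsTriangle G v (a i) (b i))
    (hdisjt : ∀ i j, i ≠ j → (({a i, b i} : Set V) ∩ {a j, b j}) = ∅) :
    ∃ ca cb cc ta tb : Fin (k + 1) → V,
      (∀ i, IsClaw G v (ca i) (cb i) (cc i)) ∧
      (∀ i, IsTriangle G v (ta i) (tb i)) ∧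
      (∀ i j, i ≠ j →
        (({v, ca i, cb i, cc i, ta i, tb i} : Set V) ∩
          {v, ca j, cb j, cc j, ta j, tb j}) = {v}) := by
  classical
  -- distinctness across different triangle indices
  have hdis : ∀ (p q : Fin (3 * k + 3)), p ≠ q → ∀ u w : V,
      (u = a p ∨ u = b p) → (w = a q ∨ w = b q) → u ≠ w := by
    intro p q hpq u w hu hw huw
    have hmem : u ∈ (({a p, b p} : Set V) ∩ {a q, b q}) := by
      constructor
      · rcases hu with rfl | rfl <;> simp
      · subst huw; rcases hw with rfl | rfl <;> simp
    rw [hdisjt p q hpq] at hmem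
    exact hmem
  set H := G.induce Sᶜ with hH
  -- the key per-group selection
  have key : ∀ i : Fin (k + 1), ∃ ca cb cc ta tb : V,
      IsClaw G v ca cb cc ∧ IsTriangle G v ta tb ∧
      (∃ p : Fin (3*k+3), (3*i.val ≤ p.val ∧ p.val < 3*i.val+3) ∧ (ca = a p ∨ ca = b p)) ∧
      (∃ p : Fin (3*k+3), (3*i.val ≤ p.val ∧ p.val < 3*i.val+3) ∧ (cb = a p ∨ cb = b p)) ∧
      (∃ p : Fin (3*k+3), (3*i.val ≤ p.val ∧ p.val < 3*i.val+3) ∧ (cc = a p ∨ cc = b p)) ∧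
      (∃ p : Fin (3*k+3), (3*i.val ≤ p.val ∧ p.val < 3*i.val+3) ∧ (ta = a p ∨ ta = b p)) ∧
      (∃ p : Fin (3*k+3), (3*i.val ≤ p.val ∧ p.val < 3*i.val+3) ∧ (tb = a p ∨ tb = b p)) := by
    intro i
    have hi := i.isLt
    let j0' : Fin (3 * k + 3) := ⟨3 * i.val, by omega⟩
    let j1 : Fin (3 * k + 3) := ⟨3 * i.val + 1, by omega⟩
    let j2 : Fin (3 * k + 3) := ⟨3 * i.val + 2, by omega⟩
    have hv0 : j0'.val = 3 * i.val := rfl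
    have hv1 : j1.val = 3 * i.val + 1 := rfl
    have hv2 : j2.val = 3 * i.val + 2 := rfl
    have hne01 : j0' ≠ j1 := Fin.ne_of_val_ne (by omega)
    have hne02 : j0' ≠ j2 := Fin.ne_of_val_ne (by omega)
    have hne12 : j1 ≠ j2 := Fin.ne_of_val_ne (by omega)
    let A0 : ↥Sᶜ := ⟨a j0', ha j0'⟩
    let B0 : ↥Sᶜ := ⟨b j0', hb j0'⟩
    let A1 : ↥Sᶜ := ⟨a j1, ha j1⟩
    let B1 : ↥Sᶜ := ⟨b j1, hb j1⟩
    let A2 : ↥Sᶜ := ⟨a j2, ha j2⟩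
    let B2 : ↥Sᶜ := ⟨b j2, hb j2⟩
    have h1 : H.Adj A0 B0 := (htri j0').2.2
    have h2 : H.Adj A1 B1 := (htri j1).2.2
    have h3 : H.Adj A2 B2 := (htri j2).2.2
    have lift_d : ∀ (p q : Fin (3*k+3)), p ≠ q →
        ∀ (x y : ↥Sᶜ), ((x:V) = a p ∨ (x:V) = b p) → ((y:V) = a q ∨ (y:V) = b q) → x ≠ y := by
      intro p q hpq x y hx hy hxy
      exact hdis p q hpq x y hx hy (congrArg Subtype.val hxy)
    have memval : ∀ (x : ↥Sᶜ) (c d : ↥Sᶜ), (x = c ∨ x = d) → ((x:V) = c ∨ (x:V) = d) := by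
      rintro x c d (rfl | rfl) <;> simp
    obtain ⟨x1, x2, x3, hx1, hx2, hx3, n12, n13, n23⟩ :=
      pick3 hforest h1 h2 h3
        (fun x y hx hy => lift_d j0' j1 hne01 x y (memval x A0 B0 hx) (memval y A1 B1 hy))
        (fun x y hx hy => lift_d j0' j2 hne02 x y (memval x A0 B0 hx) (memval y A2 B2 hy))
        (fun x y hx hy => lift_d j1 j2 hne12 x y (memval x A1 B1 hx) (memval y A2 B2 hy))
    have hx1v := memval x1 A0 B0 hx1
    have hx2v := memval x2 A1 B1 hx2
    have hx3v := memval x3 A2 B2 hx3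
    refine ⟨(x1:V), (x2:V), (x3:V), a j0', b j0', ?_, htri j0', ?_, ?_, ?_, ?_, ?_⟩
    · refine ⟨hdis j0' j1 hne01 _ _ hx1v hx2v, hdis j0' j2 hne02 _ _ hx1v hx3v,
        hdis j1 j2 hne12 _ _ hx2v hx3v, ?_, ?_, ?_, n12, n13, n23⟩
      · rcases hx1v with h | h <;> rw [h]
        exacts [(htri j0').1, (htri j0').2.1]
      · rcases hx2v with h | h <;> rw [h]
        exacts [(htri j1).1, (htri j1).2.1]
      · rcases hx3v with h | h <;> rw [h]
        exacts [(htri j2).1, (htri j2).2.1]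
    · exact ⟨j0', ⟨by omega, by omega⟩, hx1v⟩
    · exact ⟨j1, ⟨by omega, by omega⟩, hx2v⟩
    · exact ⟨j2, ⟨by omega, by omega⟩, hx3v⟩
    · exact ⟨j0', ⟨by omega, by omega⟩, Or.inl rfl⟩
    · exact ⟨j0', ⟨by omega, by omega⟩, Or.inr rfl⟩
  choose ca cb cc ta tb hclaw htr g1 g2 g3 g4 g5 using key
  refine ⟨ca, cb, cc, ta, tb, hclaw, htr, ?_⟩
  intro i j hij
  have hcross : ∀ x : V,
      (∃ p : Fin (3*k+3), (3*i.val ≤ p.val ∧ p.val < 3*i.val+3) ∧ (x = a p ∨ x = b p)) →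
      (∃ q : Fin (3*k+3), (3*j.val ≤ q.val ∧ q.val < 3*j.val+3) ∧ (x = a q ∨ x = b q)) →
      False := by
    rintro x ⟨p, hp, hxp⟩ ⟨q, hq, hxq⟩
    have hij' : i.val ≠ j.val := fun h => hij (Fin.ext h)
    have hpq : p ≠ q := Fin.ne_of_val_ne (by omega)
    exact hdis p q hpq x x hxp hxq rfl
  ext x
  simp only [Set.mem_inter_iff, Set.mem_insert_iff, Set.mem_singleton_iff]
  constructor
  · rintro ⟨hxi, hxj⟩
    rcases hxi with rfl | hxi
    · exact rfl
    rcases hxj with rfl | hxj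
    · exact rfl
    exfalso
    refine hcross x ?_ ?_
    · rcases hxi with rfl | rfl | rfl | rfl | rfl
      exacts [g1 i, g2 i, g3 i, g4 i, g5 i]
    · rcases hxj with rfl | rfl | rfl | rfl | rfl
      exacts [g1 j, g2 j, g3 j, g4 j, g5 j]
  · rintro rfl
    exact ⟨Or.inl rfl, Or.inl rfl⟩
end

section
/- Let K = {K_1, ..., K_t} be a clique partition of a connected proper interval graph G obtained from a proper interval ordering. Then for each 1 < i < t, N(K_i) ⊆ K_{i−1} ∪ K_{i+1}; moreover N(K_1) ⊆ K_2 and N(K_t) ⊆ K_{t−1}. -/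
open SimpleGraph

/-- Neighborhood structure of the greedy clique partition of a connected proper
interval graph: N(Kᵢ) ⊆ K_{i-1} ∪ K_{i+1}, N(K₁) ⊆ K₂, N(K_t) ⊆ K_{t-1}. -/
theorem stmt16 {V : Type*} (G : SimpleGraph V) (hconn : G.Connected)
    {n : ℕ} (w : Fin n ≃ V) (f : V → ℝ)
    (hrep : ∀ u v : V, u ≠ v → (G.Adj u v ↔ |f u - f v| ≤ 1))
    (hmono : ∀ i j : Fin n, i < j → f (w i) < f (w j))
    (t : ℕ) (bnd : ℕ → ℕ)
    (hb0 : bnd 0 = 0) (hbt : bnd t = n)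
    (hbmono : ∀ i < t, bnd i < bnd (i + 1))
    (hgreedy1 : ∀ i < t, ∀ p q : Fin n, p.val = bnd i → bnd i < q.val →
      q.val < bnd (i + 1) → G.Adj (w p) (w q))
    (hgreedy2 : ∀ i < t, ∀ p q : Fin n, p.val = bnd i → q.val = bnd (i + 1) →
      ¬ G.Adj (w p) (w q))
    (K : ℕ → Set V)
    (hK : ∀ i, K i = {x | ∃ p : Fin n, w p = x ∧ bnd i ≤ p.val ∧ p.val < bnd (i + 1)}) :
    (∀ i, 0 < i → i + 1 < t → ∀ x ∈ K i, ∀ y, G.Adj x y → y ∉ K i →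
      y ∈ K (i - 1) ∪ K (i + 1)) ∧
    (1 < t → ∀ x ∈ K 0, ∀ y, G.Adj x y → y ∉ K 0 → y ∈ K 1) ∧
    (1 < t → ∀ x ∈ K (t - 1), ∀ y, G.Adj x y → y ∉ K (t - 1) → y ∈ K (t - 2)) := by
  have hmono' : ∀ i j : Fin n, i ≤ j → f (w i) ≤ f (w j) := by
    intro i j hij
    rcases eq_or_lt_of_le hij with h | h
    · rw [h]
    · exact (hmono i j h).le
  -- key separation lemma
  have key : ∀ i < t, ∀ p q : Fin n, q.val < bnd i → bnd (i + 1) ≤ p.val →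
      ¬ G.Adj (w p) (w q) := by
    intro i hi p q hq hp hadj
    have hbi : bnd i < bnd (i + 1) := hbmono i hi
    have hbn1 : bnd (i + 1) < n := lt_of_le_of_lt hp p.isLt
    have hbn : bnd i < n := lt_trans hbi hbn1
    set a : Fin n := ⟨bnd i, hbn⟩ with ha
    set b : Fin n := ⟨bnd (i + 1), hbn1⟩ with hb
    have hnadj := hgreedy2 i hi a b rfl rfl
    have hab : a < b := by simpa [ha, hb, Fin.lt_def] using hbi
    have hne : w a ≠ w b := fun h => (ne_of_lt hab) (w.injective h)
    have habs : ¬ |f (w a) - f (w b)| ≤ 1 := fun h => hnadj ((hrep _ _ hne).mpr h)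
    push_neg at habs
    have hfab : f (w a) < f (w b) := hmono a b hab
    have heq : |f (w a) - f (w b)| = -(f (w a) - f (w b)) :=
      abs_of_neg (by linarith)
    have h1 : (1 : ℝ) < f (w b) - f (w a) := by rw [heq] at habs; linarith
    have hne2 : w p ≠ w q := hadj.ne
    have h2 : |f (w p) - f (w q)| ≤ 1 := (hrep _ _ hne2).mp hadj
    have h3 : f (w p) - f (w q) ≤ 1 := (le_abs_self _).trans h2
    have hqa : f (w q) < f (w a) := hmono q a (by simpa [ha, Fin.lt_def] using hq)
    have hbp : f (w b) ≤ f (w p) := hmono' b p (by simpa [hb, Fin.le_def] using hp)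
    linarith
  refine ⟨?_, ?_, ?_⟩
  · intro i hi0 hit x hx y hxy hy
    rw [hK] at hx
    obtain ⟨p, hpx, hpl, hpu⟩ := hx
    set q : Fin n := w.symm y with hqdef
    have hwq : w q = y := w.apply_symm_apply y
    rw [hK] at hy
    have hyb : ¬ (bnd i ≤ q.val ∧ q.val < bnd (i + 1)) := fun h => hy ⟨q, hwq, h⟩
    rcases lt_or_ge q.val (bnd i) with hlow | hhigh
    · -- show bnd (i-1) ≤ q
      left
      rw [hK]
      have hil : bnd (i - 1) ≤ q.val := by
        by_contra hc
        push_neg at hc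
        have : bnd (i - 1 + 1) ≤ p.val := by
          have : i - 1 + 1 = i := by omega
          rw [this]; exact hpl
        exact key (i - 1) (by omega) p q hc this (hpx ▸ hwq ▸ hxy)
      have : i - 1 + 1 = i := by omega
      exact ⟨q, hwq, hil, by rw [this]; exact hlow⟩
    · have hq1 : bnd (i + 1) ≤ q.val := by omega
      right
      rw [hK]
      have hiu : q.val < bnd (i + 1 + 1) := by
        by_contra hc
        push_neg at hc
        have hadj' : G.Adj (w q) (w p) := by rw [hpx, hwq]; exact hxy.symm
        exact key (i + 1) hit q p hpu hc hadj'
      exact ⟨q, hwq, hq1, hiu⟩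
  · intro ht x hx y hxy hy
    rw [hK] at hx
    obtain ⟨p, hpx, hpl, hpu⟩ := hx
    set q : Fin n := w.symm y with hqdef
    have hwq : w q = y := w.apply_symm_apply y
    rw [hK] at hy
    have hyb : ¬ (bnd 0 ≤ q.val ∧ q.val < bnd 1) := fun h => hy ⟨q, hwq, h⟩
    have hq1 : bnd 1 ≤ q.val := by omega
    rw [hK]
    have hiu : q.val < bnd 2 := by
      by_contra hc
      push_neg at hc
      have hadj' : G.Adj (w q) (w p) := by rw [hpx, hwq]; exact hxy.symm
      exact key 1 ht q p hpu hc hadj'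
    exact ⟨q, hwq, hq1, hiu⟩
  · intro ht x hx y hxy hy
    rw [hK] at hx
    obtain ⟨p, hpx, hpl, hpu⟩ := hx
    set q : Fin n := w.symm y with hqdef
    have hwq : w q = y := w.apply_symm_apply y
    rw [hK] at hy
    have hyb : ¬ (bnd (t - 1) ≤ q.val ∧ q.val < bnd (t - 1 + 1)) :=
      fun h => hy ⟨q, hwq, h⟩
    have hqn : q.val < n := q.isLt
    have hqt : q.val < bnd (t - 1 + 1) := by
      have : t - 1 + 1 = t := by omega
      rw [this, hbt]; exact hqn
    have hlow : q.val < bnd (t - 1) := by omega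
    rw [hK]
    have hil : bnd (t - 2) ≤ q.val := by
      by_contra hc
      push_neg at hc
      have hp2 : bnd (t - 2 + 1) ≤ p.val := by
        have : t - 2 + 1 = t - 1 := by omega
        rw [this]; exact hpl
      exact key (t - 2) (by omega) p q hc hp2 (hpx ▸ hwq ▸ hxy)
    have : t - 2 + 1 = t - 1 := by omega
    exact ⟨q, hwq, hil, by rw [this]; exact hlow⟩
end
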